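/- Let 0 < α < 1, n ∈ ℕ with n^{1−α} > 2, s ∈ ℕ, and let f ∈ C^s(ℝ) with f^{(k)} continuous and bounded on ℝ for k = 1, …, s. Then for each k = 1, …, s: (i) |(A_n(f))^{(k)}(x) − f^{(k)}(x)| ≤ ω(f^{(k)}, 1/n^α) + 2(q + 1/q)‖f^{(k)}‖_∞ / B^{β(n^{1−α} − 1)} for all x ∈ ℝ, and ‖(A_n(f))^{(k)} − f^{(k)}‖_∞ is bounded by the same quantity; (ii) |(A_n^*(f))^{(k)}(x) − f^{(k)}(x)| ≤ ω(f^{(k)}, 1/n + 1/n^α) + 2(q + 1/q)‖f^{(k)}‖_∞ / B^{β(n^{1−α} − 1)} for all x ∈ ℝ, with the same sup-norm bound; (iii) |(Ā_n(f))^{(k)}(x) − f^{(k)}(x)| ≤ ω(f^{(k)}, 1/n + 1/n^α) + 2(q + 1/q)‖f^{(k)}‖_∞ / B^{β(n^{1−α} − 1)} for all x ∈ ℝ, with the same sup-norm bound. -/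

import Mathlib

open MeasureTheory Real Filter

noncomputable def nu (B q β x : ℝ) : ℝ := 1 / (1 + q * B ^ (-(β * x)))

noncomputable def G (B q β x : ℝ) : ℝ := (nu B q β (x + 1) - nu B q β (x - 1)) / 2

noncomputable def Psi (B q β x : ℝ) : ℝ := (G B q β x + G B (1 / q) β x) / 2

noncomputable def modCont (f : ℝ → ℝ) (θ : ℝ) : ℝ :=
  sSup {d : ℝ | ∃ x y : ℝ, |x - y| ≤ θ ∧ d = |f x - f y|}

noncomputable def supNorm (f : ℝ → ℝ) : ℝ := ⨆ x : ℝ, |f x|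

noncomputable def opA (B q β : ℝ) (n : ℕ) (f : ℝ → ℝ) (x : ℝ) : ℝ :=
  ∫ v : ℝ, f (v / n) * Psi B q β (n * x - v)

noncomputable def opAStar (B q β : ℝ) (n : ℕ) (f : ℝ → ℝ) (x : ℝ) : ℝ :=
  (n : ℝ) * ∫ v : ℝ, (∫ h in (v / n)..((v + 1) / n), f h) * Psi B q β (n * x - v)

noncomputable def opABar (B q β : ℝ) (r : ℕ) (w : ℕ → ℝ) (n : ℕ) (f : ℝ → ℝ) (x : ℝ) : ℝ :=
  ∫ v : ℝ, (∑ s ∈ Finset.Icc 1 r, w s * f (v / n + (s : ℝ) / ((n : ℝ) * (r : ℝ)))) *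
    Psi B q β (n * x - v)

open Set Topology

section Basic

variable {B p β : ℝ}

lemma denom_pos (hB : 1 < B) (hp : 0 < p) (x : ℝ) : 0 < 1 + p * B ^ (-(β * x)) := by
  have := rpow_pos_of_pos (lt_trans one_pos hB) (-(β * x)); nlinarith

lemma nu_pos (hB : 1 < B) (hp : 0 < p) (x : ℝ) : 0 < nu B p β x :=
  div_pos one_pos (denom_pos hB hp x)

lemma nu_lt_one (hB : 1 < B) (hp : 0 < p) (x : ℝ) : nu B p β x < 1 := by
  have h := denom_pos hB hp (β := β) x
  have := rpow_pos_of_pos (lt_trans one_pos hB) (-(β * x))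
  rw [nu, div_lt_one h]; nlinarith

lemma nu_mono (hB : 1 < B) (hp : 0 < p) (hβ : 0 < β) : Monotone (nu B p β) := by
  intro x y hxy
  have h1 : B ^ (-(β * y)) ≤ B ^ (-(β * x)) := by
    apply rpow_le_rpow_left_iff hB |>.2; nlinarith
  have h2 := denom_pos hB hp (β := β) y
  have h3 := denom_pos hB hp (β := β) x
  show 1 / _ ≤ 1 / _
  apply one_div_le_one_div_of_le h2
  nlinarith

lemma one_sub_nu_le (hB : 1 < B) (hp : 0 < p) (x : ℝ) :
    1 - nu B p β x ≤ p * B ^ (-(β * x)) := by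
  have h := denom_pos hB hp (β := β) x
  have h2 := rpow_pos_of_pos (lt_trans one_pos hB) (-(β * x))
  rw [nu]
  have : 1 - 1 / (1 + p * B ^ (-(β * x))) = (p * B ^ (-(β * x))) / (1 + p * B ^ (-(β * x))) := by
    field_simp
    ring
  rw [this, div_le_iff₀ h]; nlinarith [mul_pos (mul_pos hp h2) (mul_pos hp h2)]

lemma nu_le (hB : 1 < B) (hp : 0 < p) (x : ℝ) :
    nu B p β x ≤ p⁻¹ * B ^ (β * x) := by
  have h := denom_pos hB hp (β := β) x
  have h2 := rpow_pos_of_pos (lt_trans one_pos hB) (-(β * x))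
  have key : p⁻¹ * B ^ (β * x) = 1 / (p * B ^ (-(β * x))) := by
    rw [rpow_neg (le_of_lt (lt_trans one_pos hB))]
    field_simp
  rw [nu, key]
  apply one_div_le_one_div_of_le (by positivity)
  nlinarith

lemma continuous_nu (hB : 1 < B) (hp : 0 < p) : Continuous (nu B p β) := by
  apply Continuous.div continuous_const
  · exact by
      have : Continuous fun x : ℝ => B ^ (-(β * x)) :=
        continuous_const.rpow (continuous_const.mul continuous_id).neg
          (fun x => Or.inl (ne_of_gt (lt_trans one_pos hB)))
      exact continuous_const.add (continuous_const.mul this)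
  · exact fun x => ne_of_gt (denom_pos hB hp x)

lemma continuous_G (hB : 1 < B) (hp : 0 < p) : Continuous (G B p β) := by
  unfold G
  exact (((continuous_nu hB hp).comp (continuous_id.add continuous_const)).sub
    ((continuous_nu hB hp).comp (continuous_id.sub continuous_const))).div_const 2

lemma G_nonneg (hB : 1 < B) (hp : 0 < p) (hβ : 0 < β) (x : ℝ) : 0 ≤ G B p β x := by
  unfold G
  have := nu_mono hB hp hβ (show x - 1 ≤ x + 1 by linarith)
  linarith

lemma log_pos' (hB : 1 < B) : 0 < Real.log B := Real.log_pos hB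

lemma rpow_eq_exp (hB : 1 < B) (y : ℝ) : B ^ y = rexp (Real.log B * y) :=
  rpow_def_of_pos (lt_trans one_pos hB) y

lemma G_decay (hB : 1 < B) (hp : 0 < p) (hβ : 0 < β) (x : ℝ) :
    G B p β x ≤ (p + p⁻¹) * rexp (β * Real.log B) * rexp (-(β * Real.log B * |x|)) := by
  have hL := log_pos' hB
  have hip : 0 < p⁻¹ := inv_pos.2 hp
  rcases le_or_gt 0 x with hx | hx
  · have h1 : G B p β x ≤ (1 - nu B p β (x - 1)) / 2 := by
      unfold G; have := nu_lt_one hB hp (β := β) (x + 1); linarith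
    have h2 := one_sub_nu_le hB hp (β := β) (x - 1)
    have h3 : B ^ (-(β * (x - 1))) = rexp (β * Real.log B) * rexp (-(β * Real.log B * |x|)) := by
      rw [rpow_eq_exp hB, ← Real.exp_add, abs_of_nonneg hx]; ring_nf
    have h4 : 0 < rexp (β * Real.log B) * rexp (-(β * Real.log B * |x|)) := by positivity
    calc G B p β x ≤ (1 - nu B p β (x - 1)) / 2 := h1
      _ ≤ p * B ^ (-(β * (x - 1))) / 2 := by linarith
      _ ≤ (p + p⁻¹) * (rexp (β * Real.log B) * rexp (-(β * Real.log B * |x|))) := by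
          rw [h3]; nlinarith
      _ = _ := by ring
  · have h1 : G B p β x ≤ nu B p β (x + 1) / 2 := by
      unfold G; have := nu_pos hB hp (β := β) (x - 1); linarith
    have h2 := nu_le hB hp (β := β) (x + 1)
    have h3 : B ^ (β * (x + 1)) = rexp (β * Real.log B) * rexp (-(β * Real.log B * |x|)) := by
      rw [rpow_eq_exp hB, ← Real.exp_add, abs_of_neg hx]; ring_nf
    have h4 : 0 < rexp (β * Real.log B) * rexp (-(β * Real.log B * |x|)) := by positivity
    calc G B p β x ≤ nu B p β (x + 1) / 2 := h1
      _ ≤ p⁻¹ * B ^ (β * (x + 1)) / 2 := by linarith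
      _ ≤ (p + p⁻¹) * (rexp (β * Real.log B) * rexp (-(β * Real.log B * |x|))) := by
          rw [h3]; nlinarith
      _ = _ := by ring

lemma integrable_exp_decay {c : ℝ} (hc0 : 0 < c) :
    Integrable (fun x : ℝ => rexp (-(c * |x|))) := by
  have h1 : IntegrableOn (fun x : ℝ => rexp (-(c * |x|))) (Ioi 0) := by
    refine (exp_neg_integrableOn_Ioi 0 hc0).congr_fun (fun x hx => ?_) measurableSet_Ioi
    rw [abs_of_pos hx]; ring_nf
  have h2 : IntegrableOn (fun x : ℝ => rexp (-(c * |x|))) (Iic 0) := by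
    have h3 := (MeasurePreserving.integrableOn_comp_preimage
      (Measure.measurePreserving_neg (volume : Measure ℝ))
      (Homeomorph.neg ℝ).measurableEmbedding).2 h1
    have hpre : (Neg.neg ⁻¹' Ioi (0:ℝ)) = Iio 0 := by
      ext x; simp [neg_pos]
    rw [hpre] at h3
    have h4 : IntegrableOn (fun x : ℝ => rexp (-(c * |x|))) (Iio 0) :=
      h3.congr_fun (fun x _ => by simp [Function.comp, abs_neg]) measurableSet_Iio
    have : (Iic (0:ℝ)) =ᵐ[volume] Iio 0 := Iio_ae_eq_Iic.symm
    exact h4.congr_set_ae this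
  rw [← integrableOn_univ, ← Iic_union_Ioi (a := (0:ℝ))]
  exact h2.union h1

lemma integrable_of_decay {h : ℝ → ℝ} (hcont : Continuous h) {A c : ℝ} (hc0 : 0 < c)
    (hb : ∀ x, |h x| ≤ A * rexp (-(c * |x|))) : Integrable h :=
  Integrable.mono' ((integrable_exp_decay hc0).const_mul A) hcont.aestronglyMeasurable
    (Eventually.of_forall (fun x => by rw [Real.norm_eq_abs]; exact hb x))

lemma integrable_G (hB : 1 < B) (hp : 0 < p) (hβ : 0 < β) : Integrable (G B p β) :=
  integrable_of_decay (continuous_G hB hp) (mul_pos hβ (log_pos' hB))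
    (fun x => by rw [abs_of_nonneg (G_nonneg hB hp hβ x)]; exact G_decay hB hp hβ x)

noncomputable def Wnu (B p β x : ℝ) : ℝ := ∫ t in (0:ℝ)..x, nu B p β t

noncomputable def Znu (B p β x : ℝ) : ℝ := (Wnu B p β (x + 1) - Wnu B p β (x - 1)) / 2

lemma hasDerivAt_Wnu (hB : 1 < B) (hp : 0 < p) (x : ℝ) :
    HasDerivAt (Wnu B p β) (nu B p β x) x := by
  refine intervalIntegral.integral_hasDerivAt_right
    ((continuous_nu hB hp).intervalIntegrable _ _)
    ((continuous_nu hB hp).stronglyMeasurableAtFilter _ _)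
    (continuous_nu hB hp).continuousAt

lemma hasDerivAt_Znu (hB : 1 < B) (hp : 0 < p) (x : ℝ) :
    HasDerivAt (Znu B p β) (G B p β x) x := by
  have h1 : HasDerivAt (fun y : ℝ => Wnu B p β (y + 1)) (nu B p β (x + 1)) x := by
    simpa [Function.comp_def] using (hasDerivAt_Wnu hB hp (x + 1)).comp x ((hasDerivAt_id x).add_const 1)
  have h2 : HasDerivAt (fun y : ℝ => Wnu B p β (y - 1)) (nu B p β (x - 1)) x := by
    simpa [Function.comp_def] using (hasDerivAt_Wnu hB hp (x - 1)).comp x ((hasDerivAt_id x).sub_const 1)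
  exact (h1.sub h2).div_const 2

lemma Znu_eq (hB : 1 < B) (hp : 0 < p) (x : ℝ) :
    Znu B p β x = (∫ t in (x - 1)..(x + 1), nu B p β t) / 2 := by
  unfold Znu Wnu
  rw [← intervalIntegral.integral_add_adjacent_intervals (a := (0:ℝ)) (b := x - 1) (c := x + 1)
    ((continuous_nu hB hp).intervalIntegrable _ _) ((continuous_nu hB hp).intervalIntegrable _ _)]
  ring

lemma Znu_le (hB : 1 < B) (hp : 0 < p) (hβ : 0 < β) (x : ℝ) :
    Znu B p β x ≤ nu B p β (x + 1) := by
  rw [Znu_eq hB hp]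
  have h : (∫ t in (x - 1)..(x + 1), nu B p β t) ≤ ∫ _t in (x - 1)..(x + 1), nu B p β (x + 1) := by
    apply intervalIntegral.integral_mono_on (by linarith)
      ((continuous_nu hB hp).intervalIntegrable _ _)
      (intervalIntegrable_const)
    intro t ht
    exact nu_mono hB hp hβ ht.2
  rw [intervalIntegral.integral_const] at h
  have : (x + 1) - (x - 1) = 2 := by ring
  rw [this] at h
  simp only [smul_eq_mul] at h
  linarith

lemma le_Znu (hB : 1 < B) (hp : 0 < p) (hβ : 0 < β) (x : ℝ) :
    nu B p β (x - 1) ≤ Znu B p β x := by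
  rw [Znu_eq hB hp]
  have h : (∫ _t in (x - 1)..(x + 1), nu B p β (x - 1)) ≤ ∫ t in (x - 1)..(x + 1), nu B p β t := by
    apply intervalIntegral.integral_mono_on (by linarith)
      (intervalIntegrable_const)
      ((continuous_nu hB hp).intervalIntegrable _ _)
    intro t ht
    exact nu_mono hB hp hβ ht.1
  rw [intervalIntegral.integral_const] at h
  have : (x + 1) - (x - 1) = 2 := by ring
  rw [this] at h
  simp only [smul_eq_mul] at h
  linarith

lemma nu_exp_form (hB : 1 < B) (x : ℝ) :
    nu B p β x = 1 / (1 + p * rexp (-(β * Real.log B * x))) := by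
  rw [nu, rpow_eq_exp hB]; ring_nf

lemma tendsto_nu_atTop (hB : 1 < B) (hp : 0 < p) (hβ : 0 < β) :
    Tendsto (nu B p β) atTop (𝓝 1) := by
  have hL := log_pos' hB
  have hexp : Tendsto (fun x : ℝ => rexp (-(β * Real.log B * x))) atTop (𝓝 0) := by
    rw [show (fun x : ℝ => rexp (-(β * Real.log B * x))) = (fun x : ℝ => rexp (-x)) ∘ (fun x => (β * Real.log B) * x) by funext x; simp]
    exact (tendsto_exp_neg_atTop_nhds_zero).comp
      (Tendsto.const_mul_atTop (by positivity) tendsto_id)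
  have hcont : Tendsto (fun y : ℝ => 1 / (1 + p * y)) (𝓝 0) (𝓝 1) := by
    have : ContinuousAt (fun y : ℝ => 1 / (1 + p * y)) 0 := by
      apply ContinuousAt.div continuousAt_const
      · fun_prop
      · simp
    simpa using this.tendsto
  have := hcont.comp hexp
  refine this.congr (fun x => ?_)
  rw [Function.comp, nu_exp_form hB]

lemma tendsto_nu_atBot (hB : 1 < B) (hp : 0 < p) (hβ : 0 < β) :
    Tendsto (nu B p β) atBot (𝓝 0) := by
  have hL := log_pos' hB
  apply squeeze_zero (fun x => le_of_lt (nu_pos hB hp x)) (g := fun x => p⁻¹ * rexp (β * Real.log B * x))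
  · intro x
    have := nu_le hB hp (β := β) x
    rw [rpow_eq_exp hB] at this
    convert this using 3
    ring
  · rw [show (fun x : ℝ => p⁻¹ * rexp (β * Real.log B * x)) = (fun y : ℝ => p⁻¹ * rexp y) ∘ (fun x => (β * Real.log B) * x) by funext x; simp [mul_assoc]]
    have h2 : Tendsto (fun x : ℝ => (β * Real.log B) * x) atBot atBot :=
      Tendsto.const_mul_atBot (by positivity) tendsto_id
    have h3 : Tendsto (fun y : ℝ => p⁻¹ * rexp y) atBot (𝓝 0) := by
      have := Real.tendsto_exp_atBot.const_mul (p⁻¹)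
      simpa using this
    exact h3.comp h2

lemma tendsto_Znu_atTop (hB : 1 < B) (hp : 0 < p) (hβ : 0 < β) :
    Tendsto (Znu B p β) atTop (𝓝 1) := by
  apply tendsto_of_tendsto_of_tendsto_of_le_of_le (g := fun x => nu B p β (x - 1))
    (h := fun _ => (1:ℝ))
  · exact (tendsto_nu_atTop hB hp hβ).comp (tendsto_atTop_add_const_right _ _ tendsto_id)
  · exact tendsto_const_nhds
  · exact fun x => le_Znu hB hp hβ x
  · intro x
    rw [Znu_eq hB hp]
    have h := Znu_le hB hp hβ x
    rw [Znu_eq hB hp] at h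
    have := nu_lt_one hB hp (β := β) (x + 1)
    linarith

lemma tendsto_Znu_atBot (hB : 1 < B) (hp : 0 < p) (hβ : 0 < β) :
    Tendsto (Znu B p β) atBot (𝓝 0) := by
  apply tendsto_of_tendsto_of_tendsto_of_le_of_le (g := fun _ => (0:ℝ))
    (h := fun x => nu B p β (x + 1))
  · exact tendsto_const_nhds
  · exact (tendsto_nu_atBot hB hp hβ).comp (tendsto_atBot_add_const_right _ _ tendsto_id)
  · intro x
    have h := le_Znu hB hp hβ x
    have h2 := nu_pos hB hp (β := β) (x - 1)
    show (0:ℝ) ≤ Znu B p β x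
    linarith
  · exact fun x => Znu_le hB hp hβ x

lemma integral_Ioi_G (hB : 1 < B) (hp : 0 < p) (hβ : 0 < β) (a : ℝ) :
    ∫ x in Ioi a, G B p β x = 1 - Znu B p β a :=
  MeasureTheory.integral_Ioi_of_hasDerivAt_of_tendsto'
    (fun x _ => hasDerivAt_Znu hB hp x) (integrable_G hB hp hβ).integrableOn
    (tendsto_Znu_atTop hB hp hβ)

lemma integral_Iic_G (hB : 1 < B) (hp : 0 < p) (hβ : 0 < β) (a : ℝ) :
    ∫ x in Iic a, G B p β x = Znu B p β a := by
  have := MeasureTheory.integral_Iic_of_hasDerivAt_of_tendsto'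
    (fun x _ => hasDerivAt_Znu hB hp x) (integrable_G hB hp hβ).integrableOn
    (tendsto_Znu_atBot hB hp hβ) (a := a)
  simpa using this

lemma integral_G_total (hB : 1 < B) (hp : 0 < p) (hβ : 0 < β) :
    ∫ x, G B p β x = 1 := by
  have h := integral_add_compl (measurableSet_Iic (a := (0:ℝ))) (integrable_G hB hp hβ)
  rw [compl_Iic] at h
  rw [← h, integral_Iic_G hB hp hβ, integral_Ioi_G hB hp hβ]
  ring

lemma Psi_eq (x : ℝ) : Psi B p β x = (G B p β x + G B p⁻¹ β x) / 2 := by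
  rw [Psi, one_div]

lemma continuous_Psi (hB : 1 < B) (hp : 0 < p) : Continuous (Psi B p β) := by
  unfold Psi
  exact ((continuous_G hB hp).add (continuous_G hB (show (0:ℝ) < 1/p by positivity))).div_const 2

lemma Psi_nonneg (hB : 1 < B) (hp : 0 < p) (hβ : 0 < β) (x : ℝ) : 0 ≤ Psi B p β x := by
  have h1 := G_nonneg hB hp hβ x
  have h2 := G_nonneg hB (show 0 < 1/p by positivity) hβ x
  rw [Psi]; positivity

lemma integrable_Psi (hB : 1 < B) (hp : 0 < p) (hβ : 0 < β) : Integrable (Psi B p β) := by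
  have h := ((integrable_G hB hp hβ).add (integrable_G hB (show (0:ℝ) < 1/p by positivity) hβ)).div_const 2
  exact h.congr (Eventually.of_forall (fun x => by simp [Psi, Pi.add_apply]))

lemma integral_Psi (hB : 1 < B) (hp : 0 < p) (hβ : 0 < β) : ∫ x, Psi B p β x = 1 := by
  have hp' : 0 < 1/p := by positivity
  unfold Psi
  rw [integral_div, integral_add (integrable_G hB hp hβ) (integrable_G hB hp' hβ),
    integral_G_total hB hp hβ, integral_G_total hB hp' hβ]
  norm_num

lemma Psi_decay (hB : 1 < B) (hp : 0 < p) (hβ : 0 < β) (x : ℝ) :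
    Psi B p β x ≤ (p + p⁻¹) * rexp (β * Real.log B) * rexp (-(β * Real.log B * |x|)) := by
  have h1 := G_decay hB hp hβ x
  have h2 := G_decay hB (show 0 < p⁻¹ by positivity) hβ x
  rw [inv_inv] at h2
  rw [Psi_eq]
  linarith

lemma tail_G_right (hB : 1 < B) (hp : 0 < p) (hβ : 0 < β) (T : ℝ) :
    ∫ x in Ioi T, G B p β x ≤ p * B ^ (-(β * (T - 1))) := by
  rw [integral_Ioi_G hB hp hβ]
  have h1 := le_Znu hB hp hβ T
  have h2 := one_sub_nu_le hB hp (β := β) (T - 1)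
  linarith

lemma tail_G_left (hB : 1 < B) (hp : 0 < p) (hβ : 0 < β) (T : ℝ) :
    ∫ x in Iic (-T), G B p β x ≤ p⁻¹ * B ^ (-(β * (T - 1))) := by
  rw [integral_Iic_G hB hp hβ]
  have h1 := Znu_le hB hp hβ (-T)
  have h2 := nu_le hB hp (β := β) (-T + 1)
  have h3 : B ^ (β * (-T + 1)) = B ^ (-(β * (T - 1))) := by ring_nf
  rw [h3] at h2
  linarith

lemma tail_Psi (hB : 1 < B) (hp : 0 < p) (hβ : 0 < β) {T : ℝ} (hT : 0 ≤ T) :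
    ∫ x in (Icc (-T) T)ᶜ, Psi B p β x ≤ (p + 1/p) * B ^ (-(β * (T - 1))) := by
  have hp' : 0 < 1/p := by positivity
  have hint := integrable_Psi hB hp hβ
  have hcompl : (Icc (-T) T)ᶜ = Iio (-T) ∪ Ioi T := by
    ext x
    simp only [mem_compl_iff, mem_Icc, not_and_or, not_le, mem_union, mem_Iio, mem_Ioi]
  have hsplit : ∀ s : Set ℝ, ∫ x in s, Psi B p β x =
      ((∫ x in s, G B p β x) + ∫ x in s, G B (1/p) β x) / 2 := by
    intro s
    have hfun : (fun x => Psi B p β x) = fun x => (G B p β x + G B (1/p) β x) / 2 :=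
      funext (fun x => by rw [Psi])
    rw [hfun]
    rw [integral_div, integral_add ((integrable_G hB hp hβ).integrableOn)
      ((integrable_G hB hp' hβ).integrableOn)]
  have hTnn : 0 ≤ T := hT
  have hdisj : Disjoint (Iio (-T)) (Ioi T) := by
    rw [Set.disjoint_left]
    intro x hx1 hx2
    simp only [mem_Iio, mem_Ioi] at hx1 hx2
    linarith
  rw [hcompl, setIntegral_union hdisj measurableSet_Ioi
    (integrable_Psi hB hp hβ).integrableOn (integrable_Psi hB hp hβ).integrableOn]
  have hio : ∫ x in Iio (-T), Psi B p β x = ∫ x in Iic (-T), Psi B p β x :=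
    setIntegral_congr_set Iio_ae_eq_Iic
  rw [hio, hsplit, hsplit]
  have h1 := tail_G_left hB hp hβ T
  have h2 := tail_G_left hB hp' hβ T
  have h3 := tail_G_right hB hp hβ T
  have h4 := tail_G_right hB hp' hβ T
  have h5 : ((1:ℝ)/p)⁻¹ = p := by field_simp
  rw [h5] at h2
  rw [(one_div p).symm] at h1
  linarith

noncomputable def Qop (B q β : ℝ) (n : ℕ) (g : ℝ → ℝ) (x : ℝ) : ℝ :=
  ∫ u : ℝ, g (x - u / n) * Psi B q β u

lemma change_var (B q β : ℝ) {n : ℕ} (hn : 0 < n) (f : ℝ → ℝ) (x : ℝ) :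
    (∫ v : ℝ, f (v / n) * Psi B q β (n * x - v)) = Qop B q β n f x := by
  have hn' : (0:ℝ) < n := by exact_mod_cast hn
  have h := integral_sub_left_eq_self
    (fun u : ℝ => f (((n:ℝ) * x - u) / n) * Psi B q β u) (volume : Measure ℝ) ((n:ℝ) * x)
  rw [show (∫ v : ℝ, f (v / n) * Psi B q β (n * x - v)) =
      ∫ v : ℝ, f (((n:ℝ) * x - ((n:ℝ) * x - v)) / n) * Psi B q β ((n:ℝ) * x - v) from by
    congr 1; funext v; congr 2; ring]
  rw [h]
  unfold Qop
  congr 1; funext u; congr 2; field_simp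

lemma integrable_kernel_mul {B q β : ℝ} (hB : 1 < B) (hq : 0 < q) (hβ : 0 < β)
    {φ : ℝ → ℝ} (hφ : Continuous φ) {a b : ℝ} (ha : 0 ≤ a) (hb : 0 ≤ b)
    (hgrow : ∀ t, |φ t| ≤ a + b * |t|) {n : ℕ} (hn : 0 < n) (x : ℝ) :
    Integrable (fun u : ℝ => φ (x - u / n) * Psi B q β u) := by
  have hn' : (0:ℝ) < n := by exact_mod_cast hn
  set c : ℝ := β * Real.log B with hcdef
  have hc0 : 0 < c := mul_pos hβ (log_pos' hB)
  set C : ℝ := (q + q⁻¹) * rexp c with hCdef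
  have hC0 : 0 < C := by
    have := exp_pos c
    have hq2 : 0 < q + q⁻¹ := by positivity
    positivity
  apply integrable_of_decay (A := C * ((a + b * |x|) + b / n * (2 / (c/2))))
    (c := c/2) ((hφ.comp (continuous_const.sub (continuous_id.div_const _))).mul
      (continuous_Psi hB hq)) (by linarith)
  intro u
  have hPsi0 := Psi_nonneg hB hq hβ u
  have hPsiD : Psi B q β u ≤ C * rexp (-(c * |u|)) := by
    have := Psi_decay hB hq hβ u
    calc Psi B q β u ≤ (q + q⁻¹) * rexp (β * Real.log B) * rexp (-(β * Real.log B * |u|)) := this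
      _ = C * rexp (-(c * |u|)) := by rw [hCdef, hcdef]
  have hφb : |φ (x - u / n)| ≤ a + b * |x| + b / n * |u| := by
    have h1 := hgrow (x - u / n)
    have h2 : |x - u / n| ≤ |x| + |u| / n := by
      calc |x - u / n| ≤ |x| + |u / n| := abs_sub _ _
        _ = |x| + |u| / n := by rw [abs_div, abs_of_pos hn']
    have : b * |x - u / n| ≤ b * (|x| + |u| / n) := by nlinarith
    calc |φ (x - u / n)| ≤ a + b * |x - u / n| := h1
      _ ≤ a + b * (|x| + |u| / n) := by linarith
      _ = a + b * |x| + b / n * |u| := by ring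
  -- key exponential manipulations
  set e1 : ℝ := rexp (-(c/2 * |u|)) with he1
  have he1pos : 0 < e1 := exp_pos _
  have hsq : rexp (-(c * |u|)) = e1 * e1 := by
    rw [he1, ← Real.exp_add]; congr 1; ring
  have he1le : e1 ≤ 1 := by
    rw [he1, ← Real.exp_zero]
    apply Real.exp_le_exp.2
    have : 0 ≤ c/2 * |u| := by positivity
    linarith
  have habs : |u| * e1 ≤ 2 / (c/2) := by
    have ht : c/2 * |u| ≤ rexp (c/2 * |u|) := by
      have := Real.add_one_le_exp (c/2 * |u|)
      linarith
    have hinv : e1 = (rexp (c/2 * |u|))⁻¹ := by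
      rw [he1, ← Real.exp_neg]
    have hep : 0 < rexp (c/2 * |u|) := exp_pos _
    rw [hinv]
    rw [le_div_iff₀ (by linarith : (0:ℝ) < c/2)]
    calc |u| * (rexp (c/2 * |u|))⁻¹ * (c/2) = (c/2 * |u|) * (rexp (c/2 * |u|))⁻¹ := by ring
      _ ≤ rexp (c/2 * |u|) * (rexp (c/2 * |u|))⁻¹ := by
          apply mul_le_mul_of_nonneg_right ht (by positivity)
      _ = 1 := by field_simp
      _ ≤ 2 := by norm_num
  have key : (a + b * |x| + b / n * |u|) * rexp (-(c * |u|)) ≤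
      ((a + b * |x|) + b / n * (2 / (c/2))) * e1 := by
    rw [hsq]
    have hax : 0 ≤ a + b * |x| := by positivity
    have t1 : (a + b * |x|) * (e1 * e1) ≤ (a + b * |x|) * e1 := by
      nlinarith [mul_nonneg (mul_nonneg hax he1pos.le) (sub_nonneg.2 he1le)]
    have t2 : b / n * |u| * (e1 * e1) ≤ b / n * (2 / (c/2)) * e1 := by
      have hbn : 0 ≤ b / n := by positivity
      nlinarith [mul_le_mul_of_nonneg_left habs (mul_nonneg hbn he1pos.le)]
    nlinarith
  calc |φ (x - u / n) * Psi B q β u| = |φ (x - u / n)| * Psi B q β u := by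
        rw [abs_mul, abs_of_nonneg hPsi0]
    _ ≤ (a + b * |x| + b / n * |u|) * (C * rexp (-(c * |u|))) := by
        apply mul_le_mul hφb hPsiD hPsi0
        positivity
    _ = C * ((a + b * |x| + b / n * |u|) * rexp (-(c * |u|))) := by ring
    _ ≤ C * (((a + b * |x|) + b / n * (2 / (c/2))) * e1) := by nlinarith
    _ = C * ((a + b * |x|) + b / n * (2 / (c/2))) * rexp (-(c/2 * |u|)) := by rw [he1]; ring

lemma Qop_hasDerivAt {B q β : ℝ} (hB : 1 < B) (hq : 0 < q) (hβ : 0 < β) {n : ℕ} (hn : 0 < n)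
    {φ φ' : ℝ → ℝ} (hφc : Continuous φ) (hφ'c : Continuous φ')
    (hd : ∀ t, HasDerivAt φ (φ' t) t) {M : ℝ} (hM : ∀ t, |φ' t| ≤ M)
    {a b : ℝ} (ha : 0 ≤ a) (hb : 0 ≤ b) (hgrow : ∀ t, |φ t| ≤ a + b * |t|) (x : ℝ) :
    HasDerivAt (Qop B q β n φ) (Qop B q β n φ' x) x := by
  have hn' : (0:ℝ) < n := by exact_mod_cast hn
  have h := hasDerivAt_integral_of_dominated_loc_of_deriv_le (μ := (volume : Measure ℝ))
    (F := fun y u => φ (y - u / n) * Psi B q β u)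
    (F' := fun y u => φ' (y - u / n) * Psi B q β u)
    (x₀ := x) (bound := fun u => M * Psi B q β u) (s := Metric.ball x 1) (Metric.ball_mem_nhds x one_pos)
    (Eventually.of_forall (fun y => ((hφc.comp (continuous_const.sub
      (continuous_id.div_const _))).mul (continuous_Psi hB hq)).aestronglyMeasurable))
    (integrable_kernel_mul hB hq hβ hφc ha hb hgrow hn x)
    ((hφ'c.comp (continuous_const.sub
      (continuous_id.div_const _))).mul (continuous_Psi hB hq)).aestronglyMeasurable
    (Eventually.of_forall (fun u => fun y _ => by
      have h0 := Psi_nonneg hB hq hβ u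
      rw [Real.norm_eq_abs, abs_mul, abs_of_nonneg h0]
      exact mul_le_mul_of_nonneg_right (hM _) h0))
    ((integrable_Psi hB hq hβ).const_mul M)
    (Eventually.of_forall (fun u => fun y _ => by
      have h1 : HasDerivAt (fun z : ℝ => z - u / n) 1 y := (hasDerivAt_id y).sub_const _
      have h2 := (hd (y - u / n)).comp y h1
      simpa using h2.mul_const (Psi B q β u)))
  exact h.2

lemma Qop_iteratedDeriv {B q β : ℝ} (hB : 1 < B) (hq : 0 < q) (hβ : 0 < β) {n : ℕ} (hn : 0 < n)
    (k : ℕ) (φ : ℕ → ℝ → ℝ)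
    (hcont : ∀ j ≤ k, Continuous (φ j))
    (hderiv : ∀ j < k, ∀ t, HasDerivAt (φ j) (φ (j + 1) t) t)
    (hgrow : ∀ j ≤ k, ∃ a b, 0 ≤ a ∧ 0 ≤ b ∧ ∀ t, |φ j t| ≤ a + b * |t|)
    (hbdd : ∀ j, 1 ≤ j → j ≤ k → ∃ M, ∀ t, |φ j t| ≤ M) :
    ∀ j ≤ k, iteratedDeriv j (Qop B q β n (φ 0)) = Qop B q β n (φ j) := by
  intro j
  induction j with
  | zero => intro _; simp [iteratedDeriv_zero]
  | succ j ih =>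
    intro hjk
    have hj : j ≤ k := le_of_lt (Nat.lt_of_succ_le hjk)
    rw [iteratedDeriv_succ, ih hj]
    funext x
    obtain ⟨a, b, ha, hb, hgr⟩ := hgrow j hj
    obtain ⟨M, hM⟩ := hbdd (j + 1) (Nat.succ_le_succ (Nat.zero_le j)) hjk
    exact (Qop_hasDerivAt hB hq hβ hn (hcont j hj) (hcont (j + 1) hjk)
      (fun t => hderiv j (Nat.lt_of_succ_le hjk) t) hM ha hb hgr x).deriv


lemma Qop_est {B q β : ℝ} (hB : 1 < B) (hq : 0 < q) (hβ : 0 < β) {n : ℕ} (hn : 0 < n)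
    {ψ : ℝ → ℝ} (hψc : Continuous ψ) {M ω T : ℝ} (hM0 : 0 ≤ M)
    (hψM : ∀ t, |ψ t| ≤ M) (hω : 0 ≤ ω) (hT : 0 ≤ T) {x y : ℝ} (hy : |y| ≤ M)
    (hclose : ∀ u : ℝ, |u| ≤ T → |ψ (x - u / n) - y| ≤ ω) :
    |Qop B q β n ψ x - y| ≤ ω + 2 * M * ((q + 1/q) * B ^ (-(β * (T - 1)))) := by
  have hn' : (0:ℝ) < n := by exact_mod_cast hn
  have int1 : Integrable (fun u : ℝ => ψ (x - u / n) * Psi B q β u) :=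
    integrable_kernel_mul hB hq hβ hψc hM0 le_rfl
      (fun t => by simpa using hψM t) hn x
  have intPsi := integrable_Psi hB hq hβ
  have int2 : Integrable (fun u : ℝ => (ψ (x - u / n) - y) * Psi B q β u) := by
    have : (fun u : ℝ => (ψ (x - u / n) - y) * Psi B q β u) =
        fun u : ℝ => ψ (x - u / n) * Psi B q β u - y * Psi B q β u := by
      funext u; ring
    rw [this]
    exact int1.sub (intPsi.const_mul y)
  have hrepr : Qop B q β n ψ x - y = ∫ u : ℝ, (ψ (x - u / n) - y) * Psi B q β u := by
    have : (fun u : ℝ => (ψ (x - u / n) - y) * Psi B q β u) =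
        fun u : ℝ => ψ (x - u / n) * Psi B q β u - y * Psi B q β u := by
      funext u; ring
    rw [this, integral_sub int1 (intPsi.const_mul y), integral_const_mul,
      integral_Psi hB hq hβ]
    unfold Qop; ring
  rw [hrepr]
  have habs : |∫ u : ℝ, (ψ (x - u / n) - y) * Psi B q β u| ≤
      ∫ u : ℝ, |ψ (x - u / n) - y| * |Psi B q β u| := by
    simpa [Real.norm_eq_abs, abs_mul] using
      norm_integral_le_integral_norm (μ := (volume : Measure ℝ))
        (fun u : ℝ => (ψ (x - u / n) - y) * Psi B q β u)
  refine le_trans habs ?_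
  have intAbs : Integrable (fun u : ℝ => |ψ (x - u / n) - y| * |Psi B q β u|) := by
    simpa [abs_mul] using int2.abs
  have hsplit := integral_add_compl (measurableSet_Icc (a := -T) (b := T)) intAbs
  rw [← hsplit]
  have hbd1 : ∫ u in Icc (-T) T, |ψ (x - u / n) - y| * |Psi B q β u| ≤ ω := by
    have step1 : ∫ u in Icc (-T) T, |ψ (x - u / n) - y| * |Psi B q β u| ≤
        ∫ u in Icc (-T) T, ω * Psi B q β u := by
      apply setIntegral_mono_on intAbs.integrableOn
        ((intPsi.const_mul ω).integrableOn) measurableSet_Icc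
      intro u hu
      have hu' : |u| ≤ T := abs_le.2 ⟨hu.1, hu.2⟩
      have h0 := Psi_nonneg hB hq hβ u
      rw [abs_of_nonneg h0]
      exact mul_le_mul_of_nonneg_right (hclose u hu') h0
    have step2 : ∫ u in Icc (-T) T, ω * Psi B q β u ≤ ω := by
      rw [integral_const_mul]
      have h1 : ∫ u in Icc (-T) T, Psi B q β u ≤ ∫ u : ℝ, Psi B q β u :=
        setIntegral_le_integral intPsi
          (Eventually.of_forall (fun u => Psi_nonneg hB hq hβ u))
      rw [integral_Psi hB hq hβ] at h1
      nlinarith [setIntegral_nonneg (μ := (volume : Measure ℝ)) measurableSet_Icc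
        (fun u (_ : u ∈ Icc (-T) T) => Psi_nonneg hB hq hβ u)]
    linarith
  have hbd2 : ∫ u in (Icc (-T) T)ᶜ, |ψ (x - u / n) - y| * |Psi B q β u| ≤
      2 * M * ((q + 1/q) * B ^ (-(β * (T - 1)))) := by
    have step1 : ∫ u in (Icc (-T) T)ᶜ, |ψ (x - u / n) - y| * |Psi B q β u| ≤
        ∫ u in (Icc (-T) T)ᶜ, (2 * M) * Psi B q β u := by
      apply setIntegral_mono_on intAbs.integrableOn
        ((intPsi.const_mul (2 * M)).integrableOn) measurableSet_Icc.compl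
      intro u _
      have h0 := Psi_nonneg hB hq hβ u
      rw [abs_of_nonneg h0]
      apply mul_le_mul_of_nonneg_right _ h0
      calc |ψ (x - u / n) - y| ≤ |ψ (x - u / n)| + |y| := abs_sub _ _
        _ ≤ 2 * M := by have := hψM (x - u / n); linarith
    have step2 : ∫ u in (Icc (-T) T)ᶜ, (2 * M) * Psi B q β u ≤
        2 * M * ((q + 1/q) * B ^ (-(β * (T - 1)))) := by
      rw [integral_const_mul]
      have := tail_Psi hB hq hβ hT
      nlinarith
    linarith
  linarith

noncomputable def Wf (g : ℝ → ℝ) (t : ℝ) : ℝ := ∫ h in (0:ℝ)..t, g h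

noncomputable def avg (n : ℕ) (g : ℝ → ℝ) (t : ℝ) : ℝ := (n:ℝ) * ∫ h in t..(t + 1/n), g h

lemma hasDerivAt_Wf {g : ℝ → ℝ} (hg : Continuous g) (t : ℝ) : HasDerivAt (Wf g) (g t) t :=
  intervalIntegral.integral_hasDerivAt_right (hg.intervalIntegrable _ _)
    (hg.stronglyMeasurableAtFilter _ _) hg.continuousAt

lemma avg_eq {g : ℝ → ℝ} (hg : Continuous g) (n : ℕ) (t : ℝ) :
    avg n g t = (n:ℝ) * (Wf g (t + 1/n) - Wf g t) := by
  unfold avg Wf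
  rw [← intervalIntegral.integral_add_adjacent_intervals (a := (0:ℝ)) (b := t) (c := t + 1/n)
    (hg.intervalIntegrable _ _) (hg.intervalIntegrable _ _)]
  ring

lemma continuous_Wf {g : ℝ → ℝ} (hg : Continuous g) : Continuous (Wf g) :=
  continuous_iff_continuousAt.2 (fun t => (hasDerivAt_Wf hg t).continuousAt)

lemma continuous_avg {g : ℝ → ℝ} (hg : Continuous g) (n : ℕ) : Continuous (avg n g) := by
  have : avg n g = fun t => (n:ℝ) * (Wf g (t + 1/n) - Wf g t) := funext (avg_eq hg n)
  rw [this]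
  exact continuous_const.mul (((continuous_Wf hg).comp (continuous_id.add continuous_const)).sub
    (continuous_Wf hg))

lemma hasDerivAt_avg {g g' : ℝ → ℝ} (hg' : Continuous g') (hd : ∀ t, HasDerivAt g (g' t) t)
    (n : ℕ) (t : ℝ) : HasDerivAt (avg n g) (avg n g' t) t := by
  have hg : Continuous g := by
    have : Differentiable ℝ g := fun t => (hd t).differentiableAt
    exact this.continuous
  have heq : avg n g = fun t => (n:ℝ) * (Wf g (t + 1/n) - Wf g t) := funext (avg_eq hg n)
  rw [heq]
  have h1 : HasDerivAt (fun y : ℝ => Wf g (y + 1/n)) (g (t + 1/n)) t := by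
    simpa [Function.comp_def] using (hasDerivAt_Wf hg (t + 1/n)).comp t ((hasDerivAt_id t).add_const (1/(n:ℝ)))
  have h2 := hasDerivAt_Wf hg t
  have h3 := (h1.sub h2).const_mul (n:ℝ)
  have h4 : avg n g' t = (n:ℝ) * (g (t + 1/n) - g t) := by
    unfold avg
    rw [intervalIntegral.integral_eq_sub_of_hasDerivAt (fun h _ => hd h)
      (hg'.intervalIntegrable _ _)]
  rw [h4]
  exact h3

lemma avg_bound {g : ℝ → ℝ} {M : ℝ} (hg : Continuous g) (hM : ∀ t, |g t| ≤ M)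
    {n : ℕ} (hn : 0 < n) (t : ℝ) : |avg n g t| ≤ M := by
  have hn' : (0:ℝ) < n := by exact_mod_cast hn
  have h := intervalIntegral.norm_integral_le_of_norm_le_const
    (C := M) (a := t) (b := t + 1/(n:ℝ)) (f := g)
    (fun x _ => by rw [Real.norm_eq_abs]; exact hM x)
  rw [Real.norm_eq_abs] at h
  have hb : |t + 1/(n:ℝ) - t| = 1/n := by
    rw [show t + 1/(n:ℝ) - t = 1/n by ring, abs_of_pos (by positivity)]
  rw [hb] at h
  unfold avg
  rw [abs_mul, abs_of_pos hn']
  calc (n:ℝ) * |∫ h in t..(t + 1/n), g h| ≤ (n:ℝ) * (M * (1/n)) := by nlinarith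
    _ = M := by field_simp

lemma avg_close {g : ℝ → ℝ} (hg : Continuous g) {n : ℕ} (hn : 0 < n)
    {t x ω δ : ℝ} (hδ : |t - x| ≤ δ)
    (hclose : ∀ h : ℝ, |h - x| ≤ δ + 1/n → |g h - g x| ≤ ω) :
    |avg n g t - g x| ≤ ω := by
  have hn' : (0:ℝ) < n := by exact_mod_cast hn
  have hrepr : avg n g t - g x = (n:ℝ) * ∫ h in t..(t + 1/n), (g h - g x) := by
    rw [intervalIntegral.integral_sub (hg.intervalIntegrable _ _) intervalIntegrable_const,
      intervalIntegral.integral_const]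
    unfold avg
    have : t + 1/(n:ℝ) - t = 1/n := by ring
    rw [this]
    simp only [smul_eq_mul]
    field_simp
  rw [hrepr]
  have h := intervalIntegral.norm_integral_le_of_norm_le_const
    (C := ω) (a := t) (b := t + 1/(n:ℝ)) (f := fun h => g h - g x) ?_
  · rw [Real.norm_eq_abs] at h
    have hb : |t + 1/(n:ℝ) - t| = 1/n := by
      rw [show t + 1/(n:ℝ) - t = 1/n by ring, abs_of_pos (by positivity)]
    rw [hb] at h
    rw [abs_mul, abs_of_pos hn']
    calc (n:ℝ) * |∫ h in t..(t + 1/n), (g h - g x)| ≤ (n:ℝ) * (ω * (1/n)) := by nlinarith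
      _ = ω := by field_simp
  · intro h hmem
    rw [Real.norm_eq_abs]
    apply hclose
    rw [Set.uIoc_of_le (by linarith [one_div_pos.2 hn'] : t ≤ t + 1/(n:ℝ))] at hmem
    obtain ⟨h1, h2⟩ := hmem
    have hnn : (0:ℝ) < 1/n := one_div_pos.2 hn'
    have hl : -(|t - x| + 1/(n:ℝ)) ≤ h - x := by
      have := neg_abs_le (t - x)
      linarith
    have hr : h - x ≤ |t - x| + 1/(n:ℝ) := by
      have := le_abs_self (t - x)
      linarith
    have habs : |h - x| ≤ |t - x| + 1/(n:ℝ) := abs_le.2 ⟨hl, hr⟩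
    linarith

lemma avg_growth {g : ℝ → ℝ} {a b : ℝ} (hg : Continuous g) (ha : 0 ≤ a) (hb : 0 ≤ b)
    (hgrow : ∀ t, |g t| ≤ a + b * |t|) {n : ℕ} (hn : 0 < n) (t : ℝ) :
    |avg n g t| ≤ (a + b) + b * |t| := by
  have hn' : (0:ℝ) < n := by exact_mod_cast hn
  have hn1 : (1:ℝ) ≤ n := by exact_mod_cast hn
  have hinv : 0 < 1/(n:ℝ) := by positivity
  have hinv1 : 1/(n:ℝ) ≤ 1 := by rw [div_le_one hn']; exact hn1
  have h := intervalIntegral.norm_integral_le_of_norm_le_const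
    (C := a + b * (|t| + 1/n)) (a := t) (b := t + 1/(n:ℝ)) (f := g) ?_
  · rw [Real.norm_eq_abs] at h
    have hbb : |t + 1/(n:ℝ) - t| = 1/n := by
      rw [show t + 1/(n:ℝ) - t = 1/n by ring, abs_of_pos hinv]
    rw [hbb] at h
    unfold avg
    rw [abs_mul, abs_of_pos hn']
    have hC : 0 ≤ a + b * (|t| + 1/n) := by positivity
    calc (n:ℝ) * |∫ h in t..(t + 1/n), g h| ≤ (n:ℝ) * ((a + b * (|t| + 1/n)) * (1/n)) := by
          nlinarith
      _ = a + b * (|t| + 1/n) := by field_simp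
      _ ≤ (a + b) + b * |t| := by nlinarith
  · intro h hmem
    rw [Set.uIoc_of_le (by linarith : t ≤ t + 1/(n:ℝ))] at hmem
    obtain ⟨h1, h2⟩ := hmem
    rw [Real.norm_eq_abs]
    have habs : |h| ≤ |t| + 1/(n:ℝ) := by
      rw [abs_le]
      have := neg_abs_le t
      have := le_abs_self t
      constructor <;> linarith
    have := hgrow h
    nlinarith

noncomputable def wavg (r : ℕ) (w : ℕ → ℝ) (n : ℕ) (g : ℝ → ℝ) (t : ℝ) : ℝ :=
  ∑ s ∈ Finset.Icc 1 r, w s * g (t + (s:ℝ)/((n:ℝ)*(r:ℝ)))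

lemma continuous_wavg {g : ℝ → ℝ} (hg : Continuous g) (r : ℕ) (w : ℕ → ℝ) (n : ℕ) :
    Continuous (wavg r w n g) := by
  apply continuous_finset_sum
  intro s _
  exact continuous_const.mul (hg.comp (continuous_id.add continuous_const))

lemma hasDerivAt_wavg {g g' : ℝ → ℝ} (hd : ∀ t, HasDerivAt g (g' t) t)
    (r : ℕ) (w : ℕ → ℝ) (n : ℕ) (t : ℝ) :
    HasDerivAt (wavg r w n g) (wavg r w n g' t) t := by
  unfold wavg
  apply HasDerivAt.fun_sum
  intro s _
  have h1 : HasDerivAt (fun y : ℝ => g (y + (s:ℝ)/((n:ℝ)*(r:ℝ))))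
      (g' (t + (s:ℝ)/((n:ℝ)*(r:ℝ)))) t := by
    simpa [Function.comp_def] using (hd (t + (s:ℝ)/((n:ℝ)*(r:ℝ)))).comp t ((hasDerivAt_id t).add_const _)
  simpa [mul_comm] using h1.const_mul (w s)

lemma wavg_bound {g : ℝ → ℝ} {M : ℝ} {r : ℕ} {w : ℕ → ℝ}
    (hw : ∀ s ∈ Finset.Icc 1 r, 0 ≤ w s) (hw1 : ∑ s ∈ Finset.Icc 1 r, w s = 1)
    (hM : ∀ t, |g t| ≤ M) (n : ℕ) (t : ℝ) : |wavg r w n g t| ≤ M := by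
  unfold wavg
  calc |∑ s ∈ Finset.Icc 1 r, w s * g (t + (s:ℝ)/((n:ℝ)*(r:ℝ)))| ≤
      ∑ s ∈ Finset.Icc 1 r, |w s * g (t + (s:ℝ)/((n:ℝ)*(r:ℝ)))| :=
        Finset.abs_sum_le_sum_abs _ _
    _ ≤ ∑ s ∈ Finset.Icc 1 r, w s * M := by
        apply Finset.sum_le_sum
        intro s hs
        rw [abs_mul, abs_of_nonneg (hw s hs)]
        exact mul_le_mul_of_nonneg_left (hM _) (hw s hs)
    _ = M := by rw [← Finset.sum_mul, hw1, one_mul]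

lemma wavg_close {g : ℝ → ℝ} {r : ℕ} {w : ℕ → ℝ}
    (hw : ∀ s ∈ Finset.Icc 1 r, 0 ≤ w s) (hw1 : ∑ s ∈ Finset.Icc 1 r, w s = 1)
    {n : ℕ} (hn : 0 < n) {t x ω δ : ℝ} (hδ : |t - x| ≤ δ)
    (hclose : ∀ h : ℝ, |h - x| ≤ δ + 1/n → |g h - g x| ≤ ω) :
    |wavg r w n g t - g x| ≤ ω := by
  have hn' : (0:ℝ) < n := by exact_mod_cast hn
  have hrepr : wavg r w n g t - g x =
      ∑ s ∈ Finset.Icc 1 r, w s * (g (t + (s:ℝ)/((n:ℝ)*(r:ℝ))) - g x) := by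
    unfold wavg
    rw [show (∑ s ∈ Finset.Icc 1 r, w s * (g (t + (s:ℝ)/((n:ℝ)*(r:ℝ))) - g x)) =
        (∑ s ∈ Finset.Icc 1 r, w s * g (t + (s:ℝ)/((n:ℝ)*(r:ℝ)))) -
        ∑ s ∈ Finset.Icc 1 r, w s * g x from by
      rw [← Finset.sum_sub_distrib]
      apply Finset.sum_congr rfl; intro s _; ring]
    rw [← Finset.sum_mul, hw1, one_mul]
  rw [hrepr]
  calc |∑ s ∈ Finset.Icc 1 r, w s * (g (t + (s:ℝ)/((n:ℝ)*(r:ℝ))) - g x)| ≤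
      ∑ s ∈ Finset.Icc 1 r, |w s * (g (t + (s:ℝ)/((n:ℝ)*(r:ℝ))) - g x)| :=
        Finset.abs_sum_le_sum_abs _ _
    _ ≤ ∑ s ∈ Finset.Icc 1 r, w s * ω := by
        apply Finset.sum_le_sum
        intro s hs
        rw [abs_mul, abs_of_nonneg (hw s hs)]
        apply mul_le_mul_of_nonneg_left _ (hw s hs)
        apply hclose
        have hs1 : 1 ≤ s := (Finset.mem_Icc.1 hs).1
        have hs2 : s ≤ r := (Finset.mem_Icc.1 hs).2
        have hr0 : 0 < r := lt_of_lt_of_le (lt_of_lt_of_le Nat.zero_lt_one hs1) hs2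
        have hr' : (0:ℝ) < r := by exact_mod_cast hr0
        have hcs0 : 0 ≤ (s:ℝ)/((n:ℝ)*(r:ℝ)) := by positivity
        have hcs1 : (s:ℝ)/((n:ℝ)*(r:ℝ)) ≤ 1/n := by
          rw [div_le_div_iff₀ (by positivity) hn']
          have : (s:ℝ) ≤ r := by exact_mod_cast hs2
          nlinarith
        have h1 : t + (s:ℝ)/((n:ℝ)*(r:ℝ)) - x ≤ |t - x| + 1/n := by
          have := le_abs_self (t - x)
          linarith
        have h2 : -(|t - x| + 1/(n:ℝ)) ≤ t + (s:ℝ)/((n:ℝ)*(r:ℝ)) - x := by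
          have := neg_abs_le (t - x)
          linarith
        have := abs_le.2 ⟨h2, h1⟩
        linarith
    _ = ω := by rw [← Finset.sum_mul, hw1, one_mul]

lemma wavg_growth {g : ℝ → ℝ} {a b : ℝ} {r : ℕ} {w : ℕ → ℝ}
    (hw : ∀ s ∈ Finset.Icc 1 r, 0 ≤ w s) (hw1 : ∑ s ∈ Finset.Icc 1 r, w s = 1)
    (ha : 0 ≤ a) (hb : 0 ≤ b) (hgrow : ∀ t, |g t| ≤ a + b * |t|)
    {n : ℕ} (hn : 0 < n) (t : ℝ) : |wavg r w n g t| ≤ (a + b) + b * |t| := by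
  have hn' : (0:ℝ) < n := by exact_mod_cast hn
  have hn1 : (1:ℝ) ≤ n := by exact_mod_cast hn
  unfold wavg
  calc |∑ s ∈ Finset.Icc 1 r, w s * g (t + (s:ℝ)/((n:ℝ)*(r:ℝ)))| ≤
      ∑ s ∈ Finset.Icc 1 r, |w s * g (t + (s:ℝ)/((n:ℝ)*(r:ℝ)))| :=
        Finset.abs_sum_le_sum_abs _ _
    _ ≤ ∑ s ∈ Finset.Icc 1 r, w s * ((a + b) + b * |t|) := by
        apply Finset.sum_le_sum
        intro s hs
        rw [abs_mul, abs_of_nonneg (hw s hs)]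
        apply mul_le_mul_of_nonneg_left _ (hw s hs)
        have hs1 : 1 ≤ s := (Finset.mem_Icc.1 hs).1
        have hs2 : s ≤ r := (Finset.mem_Icc.1 hs).2
        have hr0 : 0 < r := lt_of_lt_of_le (lt_of_lt_of_le Nat.zero_lt_one hs1) hs2
        have hr' : (0:ℝ) < r := by exact_mod_cast hr0
        have hcs0 : 0 ≤ (s:ℝ)/((n:ℝ)*(r:ℝ)) := by positivity
        have hcs1 : (s:ℝ)/((n:ℝ)*(r:ℝ)) ≤ 1 := by
          rw [div_le_one (by positivity)]
          have h1 : (s:ℝ) ≤ r := by exact_mod_cast hs2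
          nlinarith
        have habs : |t + (s:ℝ)/((n:ℝ)*(r:ℝ))| ≤ |t| + 1 := by
          calc |t + (s:ℝ)/((n:ℝ)*(r:ℝ))| ≤ |t| + |(s:ℝ)/((n:ℝ)*(r:ℝ))| := abs_add_le _ _
            _ ≤ |t| + 1 := by rw [abs_of_nonneg hcs0]; linarith
        have := hgrow (t + (s:ℝ)/((n:ℝ)*(r:ℝ)))
        nlinarith
    _ = (a + b) + b * |t| := by rw [← Finset.sum_mul, hw1, one_mul]

lemma supNorm_is_bound {g : ℝ → ℝ} {M₀ : ℝ} (hb : ∀ x, |g x| ≤ M₀) (x : ℝ) :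
    |g x| ≤ supNorm g :=
  le_ciSup ⟨M₀, by rintro v ⟨y, rfl⟩; exact hb y⟩ x

lemma supNorm_nonneg {g : ℝ → ℝ} {M₀ : ℝ} (hb : ∀ x, |g x| ≤ M₀) : 0 ≤ supNorm g :=
  le_trans (abs_nonneg (g 0)) (supNorm_is_bound hb 0)

lemma supNorm_le' {g : ℝ → ℝ} {a : ℝ} (ha : 0 ≤ a) (h : ∀ x, |g x| ≤ a) : supNorm g ≤ a :=
  Real.iSup_le h ha

lemma modCont_spec {g : ℝ → ℝ} {M₀ : ℝ} (hb : ∀ x, |g x| ≤ M₀) {θ x y : ℝ}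
    (h : |x - y| ≤ θ) : |g x - g y| ≤ modCont g θ := by
  apply le_csSup
  · refine ⟨2 * M₀, ?_⟩
    rintro d ⟨u, v, _, rfl⟩
    calc |g u - g v| ≤ |g u| + |g v| := abs_sub _ _
      _ ≤ 2 * M₀ := by have := hb u; have := hb v; linarith
  · exact ⟨x, y, h, rfl⟩

lemma modCont_nonneg {g : ℝ → ℝ} {M₀ : ℝ} (hb : ∀ x, |g x| ≤ M₀) {θ : ℝ} (hθ : 0 ≤ θ) :
    0 ≤ modCont g θ := by
  have := modCont_spec hb (θ := θ) (x := 0) (y := 0) (by simpa using hθ)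
  simpa using this

end Basic

/-- simultaneous approximation of derivatives by `A_n`, `A_n^*`, `Ā_n`. -/
theorem derivatives_approx (B q β α : ℝ) (hB : 1 < B) (hq : 0 < q) (hβ : 0 < β)
    (hα0 : 0 < α) (hα1 : α < 1) (n : ℕ) (hn : 2 < (n : ℝ) ^ (1 - α))
    (r : ℕ) (w : ℕ → ℝ) (hw : ∀ t ∈ Finset.Icc 1 r, 0 ≤ w t)
    (hw1 : ∑ t ∈ Finset.Icc 1 r, w t = 1)
    (s : ℕ) (f : ℝ → ℝ) (hf : ContDiff ℝ (s : ℕ∞) f)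
    (hbd : ∀ k : ℕ, 1 ≤ k → k ≤ s →
      Continuous (iteratedDeriv k f) ∧ ∃ M : ℝ, ∀ x : ℝ, |iteratedDeriv k f x| ≤ M) :
    ∀ k : ℕ, 1 ≤ k → k ≤ s →
      ((∀ x : ℝ, |iteratedDeriv k (opA B q β n f) x - iteratedDeriv k f x| ≤
            modCont (iteratedDeriv k f) (1 / (n : ℝ) ^ α) +
              2 * (q + 1 / q) * supNorm (iteratedDeriv k f) /
                B ^ (β * ((n : ℝ) ^ (1 - α) - 1))) ∧
        supNorm (fun x => iteratedDeriv k (opA B q β n f) x - iteratedDeriv k f x) ≤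
          modCont (iteratedDeriv k f) (1 / (n : ℝ) ^ α) +
            2 * (q + 1 / q) * supNorm (iteratedDeriv k f) /
              B ^ (β * ((n : ℝ) ^ (1 - α) - 1))) ∧
      ((∀ x : ℝ, |iteratedDeriv k (opAStar B q β n f) x - iteratedDeriv k f x| ≤
            modCont (iteratedDeriv k f) (1 / (n : ℝ) + 1 / (n : ℝ) ^ α) +
              2 * (q + 1 / q) * supNorm (iteratedDeriv k f) /
                B ^ (β * ((n : ℝ) ^ (1 - α) - 1))) ∧
        supNorm (fun x => iteratedDeriv k (opAStar B q β n f) x - iteratedDeriv k f x) ≤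
          modCont (iteratedDeriv k f) (1 / (n : ℝ) + 1 / (n : ℝ) ^ α) +
            2 * (q + 1 / q) * supNorm (iteratedDeriv k f) /
              B ^ (β * ((n : ℝ) ^ (1 - α) - 1))) ∧
      ((∀ x : ℝ, |iteratedDeriv k (opABar B q β r w n f) x - iteratedDeriv k f x| ≤
            modCont (iteratedDeriv k f) (1 / (n : ℝ) + 1 / (n : ℝ) ^ α) +
              2 * (q + 1 / q) * supNorm (iteratedDeriv k f) /
                B ^ (β * ((n : ℝ) ^ (1 - α) - 1))) ∧
        supNorm (fun x => iteratedDeriv k (opABar B q β r w n f) x - iteratedDeriv k f x) ≤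
          modCont (iteratedDeriv k f) (1 / (n : ℝ) + 1 / (n : ℝ) ^ α) +
            2 * (q + 1 / q) * supNorm (iteratedDeriv k f) /
              B ^ (β * ((n : ℝ) ^ (1 - α) - 1))) := by
  intro k hk1 hks
  have hB0 : (0:ℝ) < B := lt_trans one_pos hB
  have hn0 : 0 < n := by
    rcases Nat.eq_zero_or_pos n with h | h
    · subst h
      rw [Nat.cast_zero, Real.zero_rpow (by linarith : (1:ℝ) - α ≠ 0)] at hn
      linarith
    · exact h
  have hn' : (0:ℝ) < n := by exact_mod_cast hn0
  have hn1 : (1:ℝ) ≤ n := by exact_mod_cast hn0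
  set T : ℝ := (n:ℝ) ^ (1 - α) with hTdef
  have hT0 : 0 ≤ T := by rw [hTdef]; positivity
  have hnα : 0 < (n:ℝ) ^ α := rpow_pos_of_pos hn' α
  have hTn : T / n = 1 / (n:ℝ) ^ α := by
    rw [hTdef, rpow_sub hn', rpow_one]
    field_simp
  set g : ℝ → ℝ := iteratedDeriv k f with hgdef
  obtain ⟨hgc, M₀, hM₀⟩ : Continuous g ∧ ∃ M : ℝ, ∀ x : ℝ, |g x| ≤ M := hbd k hk1 hks
  set Mg : ℝ := supNorm g with hMgdef
  have hgM : ∀ t, |g t| ≤ Mg := supNorm_is_bound hM₀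
  have hMg0 : 0 ≤ Mg := supNorm_nonneg hM₀
  have hθ₁ : (0:ℝ) ≤ 1 / (n:ℝ) ^ α := by positivity
  have hθ₂ : (0:ℝ) ≤ 1 / (n:ℝ) + 1 / (n:ℝ) ^ α := by positivity
  have hω₁ : 0 ≤ modCont g (1 / (n:ℝ) ^ α) := modCont_nonneg hM₀ hθ₁
  have hω₂ : 0 ≤ modCont g (1 / (n:ℝ) + 1 / (n:ℝ) ^ α) := modCont_nonneg hM₀ hθ₂
  have hq1 : 0 < q + 1/q := by
    have := one_div_pos.2 hq
    linarith
  have htail : 2 * (q + 1/q) * Mg / B ^ (β * (T - 1)) =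
      2 * Mg * ((q + 1/q) * B ^ (-(β * (T - 1)))) := by
    rw [rpow_neg hB0.le, div_eq_mul_inv]
    ring
  have htail0 : 0 ≤ 2 * (q + 1/q) * Mg / B ^ (β * (T - 1)) := by
    have := rpow_pos_of_pos hB0 (β * (T - 1))
    positivity
  -- facts about iterated derivatives of f
  have hfd : ∀ j < k, ∀ t, HasDerivAt (iteratedDeriv j f) (iteratedDeriv (j+1) f t) t := by
    intro j hj t
    have hdiff : Differentiable ℝ (iteratedDeriv j f) :=
      hf.differentiable_iteratedDeriv j (by exact_mod_cast lt_of_lt_of_le hj hks)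
    rw [iteratedDeriv_succ]
    exact (hdiff t).hasDerivAt
  have hfcont : ∀ j ≤ k, Continuous (iteratedDeriv j f) := by
    intro j hj
    exact hf.continuous_iteratedDeriv j (by exact_mod_cast le_trans hj hks)
  have hfbdd : ∀ j, 1 ≤ j → j ≤ k → ∃ M, ∀ t, |iteratedDeriv j f t| ≤ M :=
    fun j h1 h2 => (hbd j h1 (le_trans h2 hks)).2
  have hfbdd' : ∀ j, 1 ≤ j → j ≤ k → ∃ M, 0 ≤ M ∧ ∀ t, |iteratedDeriv j f t| ≤ M := by
    intro j h1 h2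
    obtain ⟨M, hM⟩ := hfbdd j h1 h2
    exact ⟨M, le_trans (abs_nonneg _) (hM 0), hM⟩
  have hfgrow0 : ∃ a b : ℝ, 0 ≤ a ∧ 0 ≤ b ∧ ∀ t, |f t| ≤ a + b * |t| := by
    obtain ⟨M₁, hM₁0, hM₁⟩ := hfbdd' 1 le_rfl hk1
    have hdf : Differentiable ℝ f := hf.differentiable (by exact_mod_cast Nat.one_le_iff_ne_zero.mp (hk1.trans hks))
    have hlip : LipschitzWith ⟨M₁, hM₁0⟩ f := by
      apply lipschitzWith_of_nnnorm_deriv_le hdf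
      intro x
      apply NNReal.coe_le_coe.1; rw [coe_nnnorm, Real.norm_eq_abs]; change |deriv f x| ≤ M₁
      simpa [iteratedDeriv_one] using hM₁ x
    refine ⟨|f 0|, M₁, abs_nonneg _, hM₁0, fun t => ?_⟩
    have h1 := hlip.dist_le_mul t 0
    rw [Real.dist_eq, Real.dist_eq] at h1
    simp only [sub_zero] at h1
    have h2 : |f t| - |f 0| ≤ |f t - f 0| := by
      have := abs_sub_abs_le_abs_sub (f t) (f 0)
      linarith
    change |f t - f 0| ≤ M₁ * |t| at h1
    linarith
  have hfgrow : ∀ j ≤ k, ∃ a b : ℝ, 0 ≤ a ∧ 0 ≤ b ∧ ∀ t, |iteratedDeriv j f t| ≤ a + b * |t| := by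
    intro j hj
    rcases Nat.eq_zero_or_pos j with h | h
    · subst h
      obtain ⟨a, b, ha, hb, hab⟩ := hfgrow0
      exact ⟨a, b, ha, hb, fun t => by simpa [iteratedDeriv_zero] using hab t⟩
    · obtain ⟨M, hM0', hM⟩ := hfbdd' j h hj
      exact ⟨M, 0, hM0', le_rfl, fun t => by simpa using hM t⟩
  have hdist : ∀ x u : ℝ, |u| ≤ T → |(x - u / n) - x| ≤ 1 / (n:ℝ) ^ α := by
    intro x u hu
    rw [show x - u / n - x = -(u / n) by ring, abs_neg, abs_div, abs_of_pos hn']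
    rw [← hTn]
    gcongr
  -- operator A
  have hA : iteratedDeriv k (opA B q β n f) = Qop B q β n g := by
    have h0 : opA B q β n f = Qop B q β n f := funext (fun x => change_var B q β hn0 f x)
    have hiter := Qop_iteratedDeriv hB hq hβ hn0 k (fun j => iteratedDeriv j f)
      hfcont hfd hfgrow hfbdd k le_rfl
    beta_reduce at hiter
    rw [iteratedDeriv_zero] at hiter
    rw [h0, hiter, ← hgdef]
  have hptA : ∀ x, |Qop B q β n g x - g x| ≤
      modCont g (1/(n:ℝ)^α) + 2 * Mg * ((q + 1/q) * B ^ (-(β * (T - 1)))) := by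
    intro x
    apply Qop_est hB hq hβ hn0 hgc hMg0 hgM hω₁ hT0 (hgM x)
    intro u hu
    exact modCont_spec hM₀ (hdist x u hu)
  -- operator A*
  have hS0 : opAStar B q β n f = Qop B q β n (avg n f) := by
    funext x
    unfold opAStar
    rw [← integral_const_mul]
    rw [show (fun v => (n:ℝ) * ((∫ h in (v/(n:ℝ))..((v+1)/(n:ℝ)), f h) * Psi B q β ((n:ℝ)*x - v))) =
        fun v => (avg n f) (v/(n:ℝ)) * Psi B q β ((n:ℝ)*x - v) from funext fun v => by
      unfold avg
      rw [show (v+1)/(n:ℝ) = v/(n:ℝ) + 1/(n:ℝ) by ring]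
      ring]
    exact change_var B q β hn0 (avg n f) x
  have hScont : ∀ j ≤ k, Continuous (avg n (iteratedDeriv j f)) :=
    fun j hj => continuous_avg (hfcont j hj) n
  have hSd : ∀ j < k, ∀ t, HasDerivAt (avg n (iteratedDeriv j f))
      (avg n (iteratedDeriv (j+1) f) t) t :=
    fun j hj t => hasDerivAt_avg (hfcont (j+1) (Nat.succ_le_of_lt hj)) (hfd j hj) n t
  have hSgrow : ∀ j ≤ k, ∃ a b, 0 ≤ a ∧ 0 ≤ b ∧
      ∀ t, |avg n (iteratedDeriv j f) t| ≤ a + b * |t| := by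
    intro j hj
    rcases Nat.eq_zero_or_pos j with h | h
    · subst h
      obtain ⟨a, b, ha, hb, hab⟩ := hfgrow0
      exact ⟨a + b, b, by linarith, hb, fun t => avg_growth (hfcont 0 (Nat.zero_le k)) ha hb
        (fun t => by simpa [iteratedDeriv_zero] using hab t) hn0 t⟩
    · obtain ⟨M, hM0', hM⟩ := hfbdd' j h hj
      exact ⟨M, 0, hM0', le_rfl, fun t => by
        simpa using avg_bound (hfcont j hj) hM hn0 t⟩
  have hSbdd : ∀ j, 1 ≤ j → j ≤ k → ∃ M, ∀ t, |avg n (iteratedDeriv j f) t| ≤ M := by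
    intro j h1 h2
    obtain ⟨M, hM0', hM⟩ := hfbdd' j h1 h2
    exact ⟨M, fun t => avg_bound (hfcont j h2) hM hn0 t⟩
  have hS : iteratedDeriv k (opAStar B q β n f) = Qop B q β n (avg n g) := by
    have hiter := Qop_iteratedDeriv hB hq hβ hn0 k (fun j => avg n (iteratedDeriv j f))
      hScont hSd hSgrow hSbdd k le_rfl
    beta_reduce at hiter
    rw [iteratedDeriv_zero] at hiter
    rw [hS0, hiter, ← hgdef]
  have hinner₂ : ∀ x h : ℝ, |h - x| ≤ 1/(n:ℝ)^α + 1/(n:ℝ) →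
      |g h - g x| ≤ modCont g (1/(n:ℝ) + 1/(n:ℝ)^α) := by
    intro x h hh
    exact modCont_spec hM₀ (by linarith : |h - x| ≤ 1/(n:ℝ) + 1/(n:ℝ)^α)
  have hptS : ∀ x, |Qop B q β n (avg n g) x - g x| ≤
      modCont g (1/(n:ℝ) + 1/(n:ℝ)^α) + 2 * Mg * ((q + 1/q) * B ^ (-(β * (T - 1)))) := by
    intro x
    apply Qop_est hB hq hβ hn0 (continuous_avg hgc n) hMg0
      (fun t => avg_bound hgc hgM hn0 t) hω₂ hT0 (hgM x)
    intro u hu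
    exact avg_close hgc hn0 (hdist x u hu) (hinner₂ x)
  -- operator Ā
  have hW0 : opABar B q β r w n f = Qop B q β n (wavg r w n f) :=
    funext (fun x => change_var B q β hn0 (wavg r w n f) x)
  have hWcont : ∀ j ≤ k, Continuous (wavg r w n (iteratedDeriv j f)) :=
    fun j hj => continuous_wavg (hfcont j hj) r w n
  have hWd : ∀ j < k, ∀ t, HasDerivAt (wavg r w n (iteratedDeriv j f))
      (wavg r w n (iteratedDeriv (j+1) f) t) t :=
    fun j hj t => hasDerivAt_wavg (hfd j hj) r w n t
  have hWgrow : ∀ j ≤ k, ∃ a b, 0 ≤ a ∧ 0 ≤ b ∧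
      ∀ t, |wavg r w n (iteratedDeriv j f) t| ≤ a + b * |t| := by
    intro j hj
    rcases Nat.eq_zero_or_pos j with h | h
    · subst h
      obtain ⟨a, b, ha, hb, hab⟩ := hfgrow0
      exact ⟨a + b, b, by linarith, hb, fun t => wavg_growth hw hw1 ha hb
        (fun t => by simpa [iteratedDeriv_zero] using hab t) hn0 t⟩
    · obtain ⟨M, hM0', hM⟩ := hfbdd' j h hj
      exact ⟨M, 0, hM0', le_rfl, fun t => by
        simpa using wavg_bound hw hw1 hM n t⟩
  have hWbdd : ∀ j, 1 ≤ j → j ≤ k → ∃ M, ∀ t, |wavg r w n (iteratedDeriv j f) t| ≤ M := by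
    intro j h1 h2
    obtain ⟨M, hM0', hM⟩ := hfbdd' j h1 h2
    exact ⟨M, fun t => wavg_bound hw hw1 hM n t⟩
  have hW : iteratedDeriv k (opABar B q β r w n f) = Qop B q β n (wavg r w n g) := by
    have hiter := Qop_iteratedDeriv hB hq hβ hn0 k (fun j => wavg r w n (iteratedDeriv j f))
      hWcont hWd hWgrow hWbdd k le_rfl
    beta_reduce at hiter
    rw [iteratedDeriv_zero] at hiter
    rw [hW0, hiter, ← hgdef]
  have hptW : ∀ x, |Qop B q β n (wavg r w n g) x - g x| ≤
      modCont g (1/(n:ℝ) + 1/(n:ℝ)^α) + 2 * Mg * ((q + 1/q) * B ^ (-(β * (T - 1)))) := by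
    intro x
    apply Qop_est hB hq hβ hn0 (continuous_wavg hgc r w n) hMg0
      (fun t => wavg_bound hw hw1 hgM n t) hω₂ hT0 (hgM x)
    intro u hu
    exact wavg_close hw hw1 hn0 (hdist x u hu) (hinner₂ x)
  refine ⟨⟨fun x => ?_, ?_⟩, ⟨fun x => ?_, ?_⟩, ⟨fun x => ?_, ?_⟩⟩
  · rw [hA, htail]; exact hptA x
  · apply supNorm_le' (add_nonneg hω₁ htail0)
    intro x
    rw [hA, htail]
    simpa using hptA x
  · rw [hS, htail]; exact hptS x
  · apply supNorm_le' (add_nonneg hω₂ htail0)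
    intro x
    rw [hS, htail]
    simpa using hptS x
  · rw [hW, htail]; exact hptW x
  · apply supNorm_le' (add_nonneg hω₂ htail0)
    intro x
    rw [hW, htail]
    simpa using hptW x
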